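/- For any a, b, c, a', b', c' ∈ F_p such that ab' − ba' = 1 in F_p, there exists a unitary p×p complex matrix h such that h X(1) h† = ω^c X(a)Z(b) and h Z(1) h† = ω^{c'} X(a')Z(b'). -/

import Mathlib

open Matrix Complex

/-- `ω = exp(2πi/p)`. -/
noncomputable def ω (p : ℕ) : ℂ := Complex.exp (2 * Real.pi * Complex.I / p)

/-- The generalized Pauli matrix `X(a)` on `ℂ^p`, with `X(a)|x⟩ = |x+a⟩`. -/
noncomputable def Xmat (p : ℕ) (a : ZMod p) : Matrix (ZMod p) (ZMod p) ℂ :=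
  fun y x => if y = x + a then 1 else 0

/-- The generalized Pauli matrix `Z(b)` on `ℂ^p`, with `Z(b)|x⟩ = ω^{bx}|x⟩`. -/
noncomputable def Zmat (p : ℕ) (b : ZMod p) : Matrix (ZMod p) (ZMod p) ℂ :=
  Matrix.diagonal fun x => ω p ^ (b * x).val


lemma omega_prim (p : ℕ) [NeZero p] : IsPrimitiveRoot (ω p) p :=
  Complex.isPrimitiveRoot_exp p (NeZero.ne p)

lemma omega_pow_p (p : ℕ) [NeZero p] : ω p ^ p = 1 := (omega_prim p).pow_eq_one

noncomputable def ee (p : ℕ) (u : ZMod p) : ℂ := ω p ^ u.val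

lemma ee_add (p : ℕ) [NeZero p] (u v : ZMod p) : ee p (u + v) = ee p u * ee p v := by
  unfold ee
  rw [ZMod.val_add, ← pow_add]
  exact (pow_eq_pow_mod _ (omega_pow_p p)).symm

lemma ee_zero (p : ℕ) : ee p 0 = 1 := by simp [ee]

lemma ee_eq_one_iff (p : ℕ) [NeZero p] (u : ZMod p) : ee p u = 1 ↔ u = 0 := by
  rw [ee, (omega_prim p).pow_eq_one_iff_dvd]
  constructor
  · intro h
    have := Nat.eq_zero_of_dvd_of_lt h
    rcases Nat.eq_zero_of_dvd_of_lt h (u.val_lt) |>.symm with h2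
    · exact (ZMod.val_eq_zero u).mp h2.symm
  · rintro rfl; simp

lemma abs_omega (p : ℕ) [NeZero p] : ‖ω p‖ = 1 := by
  have h : ‖ω p‖ ^ p = 1 := by
    rw [← norm_pow, omega_pow_p]; simp
  have h0 : (0:ℝ) ≤ ‖ω p‖ := norm_nonneg _
  have hp : p ≠ 0 := NeZero.ne p
  rcases lt_trichotomy (‖ω p‖) 1 with hlt | heq | hgt
  · have := pow_lt_one₀ h0 hlt hp
    rw [h] at this; exact absurd this (lt_irrefl 1)
  · exact heq
  · have := one_lt_pow₀ hgt hp
    rw [h] at this; exact absurd this (lt_irrefl 1)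

lemma ee_ne_zero (p : ℕ) [NeZero p] (u : ZMod p) : ee p u ≠ 0 := by
  intro h
  have : ‖ee p u‖ = 0 := by rw [h]; simp
  rw [ee, norm_pow, abs_omega, one_pow] at this
  norm_num at this

lemma star_ee (p : ℕ) [NeZero p] (u : ZMod p) :
    starRingEnd ℂ (ee p u) = ee p (-u) := by
  have h1 : ee p u * ee p (-u) = 1 := by rw [← ee_add]; simp [ee_zero]
  have h2 : ee p u * starRingEnd ℂ (ee p u) = 1 := by
    rw [Complex.mul_conj]
    norm_cast
    rw [Complex.normSq_eq_norm_sq, ee, norm_pow, abs_omega, one_pow, one_pow]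
  exact mul_left_cancel₀ (ee_ne_zero p u) (h2.trans h1.symm)

noncomputable def W (p : ℕ) [NeZero p] (a b : ZMod p) : Matrix (ZMod p) (ZMod p) ℂ :=
  Xmat p a * Zmat p b

lemma W_apply (p : ℕ) [NeZero p] (a b : ZMod p) (y x : ZMod p) :
    W p a b y x = if y = x + a then ee p (b * x) else 0 := by
  unfold W Zmat
  rw [Matrix.mul_diagonal]
  simp [Xmat, ee, ite_mul]

lemma W_zero (p : ℕ) [NeZero p] : W p 0 0 = 1 := by
  ext y x
  rw [W_apply]
  simp [Matrix.one_apply, ee_zero, eq_comm]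

lemma W_mul (p : ℕ) [NeZero p] (a b a' b' : ZMod p) :
    W p a b * W p a' b' = ee p (b * a') • W p (a + a') (b + b') := by
  ext y x
  rw [Matrix.mul_apply, Finset.sum_eq_single (x + a')]
  · rw [W_apply, W_apply, Matrix.smul_apply, W_apply, smul_eq_mul]
    have hc : x + a' + a = x + (a + a') := by ring
    rw [hc]
    by_cases h : y = x + (a + a')
    · simp only [h, if_pos rfl, if_true]
      rw [← ee_add, ← ee_add]
      congr 1
      ring
    · simp [h]
  · intro z _ hz
    rw [W_apply p a' b' z x]
    simp [hz]
  · intro h; exact absurd (Finset.mem_univ _) h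

lemma W_star (p : ℕ) [NeZero p] (a b : ZMod p) :
    (W p a b)ᴴ = ee p (a * b) • W p (-a) (-b) := by
  ext x y
  rw [Matrix.conjTranspose_apply, W_apply, Matrix.smul_apply, W_apply, smul_eq_mul]
  by_cases h : y = x + a
  · have h' : x = y + -a := by rw [h]; ring
    rw [if_pos h, if_pos h']
    rw [show star (ee p (b * x)) = ee p (-(b*x)) from star_ee p _, ← ee_add]
    congr 1
    rw [h]
    ring
  · have h' : ¬ x = y + -a := by
      intro hx; apply h; rw [hx]; ring
    rw [if_neg h, if_neg h', star_zero, mul_zero]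

lemma W_pow (p : ℕ) [NeZero p] (a b : ZMod p) (k : ℕ) :
    (W p a b) ^ k = ee p (((k * (k-1) / 2 : ℕ) : ZMod p) * (a * b)) •
      W p ((k : ZMod p) * a) ((k : ZMod p) * b) := by
  induction k with
  | zero => simp [W_zero, ee_zero]
  | succ k ih =>
    rw [pow_succ, ih, Matrix.smul_mul, W_mul, smul_smul, ← ee_add]
    have hnat : (k+1) * (k+1-1) / 2 = k * (k-1) / 2 + k := by
      rw [← Nat.choose_two_right, ← Nat.choose_two_right, Nat.choose_succ_succ,
        Nat.choose_one_right, Nat.add_comm]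
    congr 1
    · congr 1
      rw [hnat]
      push_cast
      ring
    · congr 1 <;> (push_cast; ring)

lemma W_pow_p (p : ℕ) [NeZero p] (hodd : Odd p) (a b : ZMod p) :
    (W p a b) ^ p = 1 := by
  rw [W_pow]
  have h2 : 2 ∣ p - 1 := by
    obtain ⟨m, hm⟩ := hodd; omega
  have hcast : ((p * (p-1) / 2 : ℕ) : ZMod p) = 0 := by
    rw [Nat.mul_div_assoc p h2]
    push_cast
    simp [ZMod.natCast_self]
  rw [hcast, ZMod.natCast_self]
  simp [W_zero, ee_zero]

lemma char_sum (p : ℕ) [NeZero p] (b : ZMod p) (hb : b ≠ 0) :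
    ∑ x : ZMod p, ee p (b * x) = 0 := by
  have key : ee p b * (∑ x : ZMod p, ee p (b * x)) = ∑ x : ZMod p, ee p (b * x) := by
    rw [Finset.mul_sum]
    exact Fintype.sum_equiv (Equiv.addLeft 1) _ _ fun x => by
      rw [← ee_add]; congr 1; simp [Equiv.addLeft]; ring
  have h1 : (ee p b - 1) * (∑ x : ZMod p, ee p (b * x)) = 0 := by
    rw [sub_mul, one_mul, key, sub_self]
  rcases mul_eq_zero.mp h1 with h | h
  · exact absurd (by linear_combination h : ee p b = 1) (fun hh => hb ((ee_eq_one_iff p b).mp hh))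
  · exact h

lemma trace_W (p : ℕ) [NeZero p] (a b : ZMod p) (h : ¬(a = 0 ∧ b = 0)) :
    Matrix.trace (W p a b) = 0 := by
  rw [Matrix.trace]
  by_cases ha : a = 0
  · subst ha
    have hb : b ≠ 0 := fun hb => h ⟨rfl, hb⟩
    calc ∑ x : ZMod p, Matrix.diag (W p 0 b) x = ∑ x : ZMod p, ee p (b * x) := by
          apply Finset.sum_congr rfl; intro x _
          rw [Matrix.diag_apply, W_apply]; simp
      _ = 0 := char_sum p b hb
  · apply Finset.sum_eq_zero
    intro x _
    rw [Matrix.diag_apply, W_apply, if_neg]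
    intro hx
    exact ha (by linear_combination -hx)

lemma inner_pres {n : Type*} [Fintype n] [DecidableEq n] (M : Matrix n n ℂ) (hM : Mᴴ * M = 1)
    (u v : n → ℂ) :
    star (M.mulVec u) ⬝ᵥ M.mulVec v = star u ⬝ᵥ v := by
  rw [Matrix.star_mulVec, Matrix.dotProduct_mulVec, Matrix.vecMul_vecMul, hM, Matrix.vecMul_one]

/-- For any `a, b, c, a', b', c' ∈ F_p` with `ab' − ba' = 1`, there exists a unitary
`h` with `h X(1) h† = ω^c X(a)Z(b)` and `h Z(1) h† = ω^{c'} X(a')Z(b')`. -/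
theorem stmt11 (p : ℕ) [Fact p.Prime] (hodd : Odd p) (a b c a' b' c' : ZMod p)
    (hs : a * b' - b * a' = 1) :
    ∃ h : Matrix (ZMod p) (ZMod p) ℂ, h ∈ unitary (Matrix (ZMod p) (ZMod p) ℂ) ∧
      h * Xmat p 1 * hᴴ = ω p ^ c.val • (Xmat p a * Zmat p b) ∧
      h * Zmat p 1 * hᴴ = ω p ^ c'.val • (Xmat p a' * Zmat p b') := by
  have hp : p.Prime := Fact.out
  have hp1 : 1 < p := hp.one_lt
  set U : Matrix (ZMod p) (ZMod p) ℂ := ee p c • W p a b with hU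
  set V : Matrix (ZMod p) (ZMod p) ℂ := ee p c' • W p a' b' with hV
  have heep : ∀ u : ZMod p, ee p u ^ p = 1 := by
    intro u; rw [ee, ← pow_mul, mul_comm, pow_mul, omega_pow_p, one_pow]
  have hUp : U ^ p = 1 := by
    rw [hU, smul_pow, heep, W_pow_p p hodd, one_smul]
  have hVp : V ^ p = 1 := by
    rw [hV, smul_pow, heep, W_pow_p p hodd, one_smul]
  have hpow_congr : ∀ m n : ℕ, ((m : ZMod p) = (n : ZMod p)) → U ^ m = U ^ n := by
    intro m n hmn
    rw [pow_eq_pow_mod m hUp, pow_eq_pow_mod n hUp]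
    congr 1
    rwa [ZMod.natCast_eq_natCast_iff'] at hmn
  have homega : ω p = ee p 1 := by rw [ee, ZMod.val_one p, pow_one]
  -- commutation
  have hcomm : V * U = ω p • (U * V) := by
    rw [hU, hV, smul_mul_smul_comm, smul_mul_smul_comm, W_mul, W_mul, homega]
    simp only [smul_smul]
    rw [show a' + a = a + a' from add_comm a' a, show b' + b = b + b' from add_comm b' b]
    congr 1
    simp only [← ee_add]
    congr 1
    linear_combination hs
  have hcommk : ∀ k : ℕ, V * U ^ k = (ω p) ^ k • (U ^ k * V) := by
    intro k
    induction k with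
    | zero => simp
    | succ k ih =>
      rw [pow_succ, ← mul_assoc, ih, Matrix.smul_mul, mul_assoc, hcomm,
        Matrix.mul_smul, smul_smul, ← pow_succ, ← mul_assoc, ← pow_succ]
  -- unitarity of U, V
  have hWstarW : ∀ u v : ZMod p, (W p u v)ᴴ * W p u v = 1 := by
    intro u v
    rw [W_star, Matrix.smul_mul, W_mul, smul_smul, ← ee_add, neg_add_cancel,
      neg_add_cancel, W_zero]
    have : u * v + -v * u = 0 := by ring
    rw [this, ee_zero, one_smul]
  have hUstar : Uᴴ * U = 1 := by
    rw [hU, Matrix.conjTranspose_smul, Matrix.smul_mul, Matrix.mul_smul, smul_smul]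
    rw [show star (ee p c) = ee p (-c) from star_ee p c, ← ee_add,
      neg_add_cancel, ee_zero, one_smul, hWstarW]
  have hVstar : Vᴴ * V = 1 := by
    rw [hV, Matrix.conjTranspose_smul, Matrix.smul_mul, Matrix.mul_smul, smul_smul]
    rw [show star (ee p c') = ee p (-c') from star_ee p c', ← ee_add,
      neg_add_cancel, ee_zero, one_smul, hWstarW]
  have hUkstar : ∀ k : ℕ, (U ^ k)ᴴ * U ^ k = 1 := by
    intro k
    induction k with
    | zero => simp
    | succ k ih =>
      rw [pow_succ, Matrix.conjTranspose_mul, mul_assoc, ← mul_assoc ((U ^ k)ᴴ),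
        ih, one_mul, hUstar]
  -- eigenvector of V
  have htrVk : ∀ k : ℕ, 0 < k → k < p → Matrix.trace (V ^ k) = 0 := by
    intro k hk0 hkp
    have hkz : (k : ZMod p) ≠ 0 := by
      rw [Ne, ZMod.natCast_eq_zero_iff]
      exact Nat.not_dvd_of_pos_of_lt hk0 hkp
    rw [hV, smul_pow, W_pow, smul_smul, Matrix.trace_smul, trace_W, smul_zero]
    rintro ⟨h1, h2⟩
    have ha' : a' = 0 := by
      rcases mul_eq_zero.mp h1 with h | h
      · exact absurd h hkz
      · exact h
    have hb' : b' = 0 := by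
      rcases mul_eq_zero.mp h2 with h | h
      · exact absurd h hkz
      · exact h
    rw [ha', hb'] at hs
    simp at hs
  set P : Matrix (ZMod p) (ZMod p) ℂ := (p : ℂ)⁻¹ • ∑ k ∈ Finset.range p, V ^ k with hP
  have hVP : V * P = P := by
    rw [hP, Matrix.mul_smul, Finset.mul_sum]
    congr 1
    have hstep : ∑ k ∈ Finset.range p, V * V ^ k = ∑ k ∈ Finset.range p, V ^ (k + 1) := by
      apply Finset.sum_congr rfl
      intro k _
      rw [pow_succ']
    rw [hstep]
    have h1 : ∑ k ∈ Finset.range (p + 1), V ^ k = ∑ k ∈ Finset.range p, V ^ (k + 1) + V ^ 0 :=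
      Finset.sum_range_succ' _ p
    have h2 : ∑ k ∈ Finset.range (p + 1), V ^ k = ∑ k ∈ Finset.range p, V ^ k + V ^ p :=
      Finset.sum_range_succ _ p
    rw [hVp] at h2
    rw [pow_zero] at h1
    exact add_right_cancel (h1.symm.trans h2)
  have hpC : (p : ℂ) ≠ 0 := by
    exact_mod_cast Nat.cast_ne_zero.mpr hp.ne_zero
  have htrP : Matrix.trace P = 1 := by
    rw [hP, Matrix.trace_smul, Matrix.trace_sum]
    rw [Finset.sum_eq_single 0]
    · rw [pow_zero, Matrix.trace_one]
      have : (Fintype.card (ZMod p) : ℂ) = (p : ℂ) := by rw [ZMod.card]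
      rw [this, smul_eq_mul, inv_mul_cancel₀ hpC]
    · intro k hk hk0
      exact htrVk k (Nat.pos_of_ne_zero hk0) (Finset.mem_range.mp hk)
    · intro h
      exact absurd (Finset.mem_range.mpr (by omega)) h
  have hPne : P ≠ 0 := by
    intro h
    rw [h, Matrix.trace_zero] at htrP
    exact one_ne_zero htrP.symm
  obtain ⟨i, j, hij⟩ : ∃ i j, P i j ≠ 0 := by
    by_contra hc
    push_neg at hc
    exact hPne (by ext i j; exact hc i j)
  set v0 : ZMod p → ℂ := fun i => P i j with hv0def
  have hv0 : V.mulVec v0 = v0 := by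
    funext i
    have hmm : (V * P) i j = P i j := by rw [hVP]
    have hmv : (V *ᵥ v0) i = (V * P) i j := by
      simp [Matrix.mulVec, dotProduct, Matrix.mul_apply, hv0def]
    rw [hmv, hVP]
  set nn : ℝ := ∑ z : ZMod p, Complex.normSq (v0 z) with hnn
  have hv0dot : star v0 ⬝ᵥ v0 = (nn : ℂ) := by
    rw [hnn]
    push_cast
    apply Finset.sum_congr rfl
    intro z _
    rw [Pi.star_apply, Complex.star_def, ← Complex.normSq_eq_conj_mul_self]
  have hnpos : 0 < nn := by
    rw [hnn]
    apply Finset.sum_pos' (fun z _ => Complex.normSq_nonneg _)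
    exact ⟨i, Finset.mem_univ i, Complex.normSq_pos.mpr hij⟩
  set s : ℝ := (Real.sqrt nn)⁻¹ with hsdef
  set w0 : ZMod p → ℂ := (s : ℂ) • v0 with hw0def
  have hVw0 : V.mulVec w0 = w0 := by rw [hw0def, Matrix.mulVec_smul, hv0]
  have hw0dot : star w0 ⬝ᵥ w0 = 1 := by
    rw [hw0def, star_smul, smul_dotProduct, dotProduct_smul, hv0dot]
    rw [show star ((s : ℝ) : ℂ) = ((s : ℝ) : ℂ) from Complex.conj_ofReal s]
    rw [smul_eq_mul, smul_eq_mul, ← Complex.ofReal_mul, ← Complex.ofReal_mul]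
    norm_cast
    have hsq : Real.sqrt nn * Real.sqrt nn = nn := Real.mul_self_sqrt hnpos.le
    have h0 : Real.sqrt nn ≠ 0 := ne_of_gt (Real.sqrt_pos.mpr hnpos)
    rw [hsdef]
    field_simp
    rw [sq, hsq]
  have horth : ∀ d : ℕ, (ω p) ^ d ≠ 1 → star w0 ⬝ᵥ (U ^ d).mulVec w0 = 0 := by
    intro d hd
    have key := inner_pres V hVstar w0 ((U ^ d).mulVec w0)
    rw [hVw0, Matrix.mulVec_mulVec, hcommk d, Matrix.smul_mulVec,
      ← Matrix.mulVec_mulVec, hVw0, dotProduct_smul, smul_eq_mul] at key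
    by_contra hne
    exact hd (mul_right_cancel₀ hne (by rw [key, one_mul]))
  set g : Matrix (ZMod p) (ZMod p) ℂ := Matrix.of fun y x => (U ^ x.val).mulVec w0 y with hg
  have hcast : ∀ x : ZMod p, ((x.val : ZMod p)) = x := fun x => by rw [ZMod.natCast_val, ZMod.cast_id]
  have hadj : gᴴ * g = 1 := by
    ext x y
    rw [Matrix.mul_apply, Matrix.one_apply]
    set d : ℕ := (y - x).val with hd
    have hyx : U ^ y.val = U ^ x.val * U ^ d := by
      rw [← pow_add]
      apply hpow_congr
      push_cast
      rw [hcast, hcast, hcast]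
      ring
    have hsum : ∑ z, gᴴ x z * g z y = star ((U ^ x.val).mulVec w0) ⬝ᵥ (U ^ y.val).mulVec w0 := by
      apply Finset.sum_congr rfl
      intro z _
      rw [Matrix.conjTranspose_apply]
      rfl
    rw [hsum, hyx, ← Matrix.mulVec_mulVec, inner_pres (U ^ x.val) (hUkstar x.val)]
    by_cases hxy : x = y
    · subst hxy
      rw [if_pos rfl]
      have : d = 0 := by rw [hd, sub_self, ZMod.val_zero]
      rw [this, pow_zero, Matrix.one_mulVec, hw0dot]
    · rw [if_neg hxy]
      apply horth
      have hdne : (y - x : ZMod p) ≠ 0 := sub_ne_zero.mpr (Ne.symm hxy)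
      have hd0 : 0 < d := by
        rw [hd]
        exact Nat.pos_of_ne_zero fun h => hdne ((ZMod.val_eq_zero _).mp h)
      exact (omega_prim p).pow_ne_one_of_pos_of_lt hd0.ne' ((y - x).val_lt)
  have hadj2 : g * gᴴ = 1 := mul_eq_one_comm.mp hadj
  have hXg : g * Xmat p 1 = U * g := by
    ext y x
    rw [Matrix.mul_apply, Matrix.mul_apply]
    have hl : ∑ z, g y z * Xmat p 1 z x = g y (x + 1) := by
      rw [Finset.sum_eq_single (x + 1)]
      · simp [Xmat]
      · intro z _ hz
        simp [Xmat, hz]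
      · intro hmem; exact absurd (Finset.mem_univ _) hmem
    have hr : ∑ z, U y z * g z x = ((U * U ^ x.val).mulVec w0) y := by
      rw [← Matrix.mulVec_mulVec]
      rfl
    rw [hl, hr, ← pow_succ']
    show (U ^ (x + 1).val).mulVec w0 y = (U ^ (x.val + 1)).mulVec w0 y
    rw [hpow_congr ((x + 1).val) (x.val + 1) (by push_cast; rw [hcast, hcast])]
  have hZg : g * Zmat p 1 = V * g := by
    ext y x
    rw [Zmat, Matrix.mul_diagonal, Matrix.mul_apply]
    have hr : ∑ z, V y z * g z x = ((V * U ^ x.val).mulVec w0) y := by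
      rw [← Matrix.mulVec_mulVec]
      rfl
    rw [hr, hcommk, Matrix.smul_mulVec, ← Matrix.mulVec_mulVec, hVw0]
    rw [Pi.smul_apply, smul_eq_mul]
    show g y x * ω p ^ (1 * x).val = _
    rw [one_mul]
    show g y x * ω p ^ x.val = ω p ^ x.val * g y x
    ring
  refine ⟨g, ?_, ?_, ?_⟩
  · rw [Unitary.mem_iff]
    constructor
    · rw [Matrix.star_eq_conjTranspose, hadj]
    · rw [Matrix.star_eq_conjTranspose, hadj2]
  · rw [hXg, mul_assoc, hadj2, mul_one]
    rfl
  · rw [hZg, mul_assoc, hadj2, mul_one]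
    rfl
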